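/- For every ρ with real part greater than 1/2, λ > 0, v > 0, and integer m ≤ 0, the contour integral along the vertical line Re(t) = v of e^{2πmt}/(t² + λ²)^ρ dt vanishes. -/

import Mathlib

open Complex MeasureTheory Filter Set intervalIntegral Topology
open scoped Real

/-!
The integrand is holomorphic on `Re t > 0`, and on `Re t ≥ v` it is `O((1 + |t|)^(-2 Re ρ))`:
`|e^(2πmt)| ≤ 1` as `m ≤ 0`, and both factors of `t² + λ² = (t - iλ)(t + iλ)` are `≫ 1 + |t|`.
As `2 Re ρ > 1`, this decay makes the horizontal sides of tall rectangles negligible, so the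
integral over `Re t = x` is the same for all `x ≥ v`, and by dominated convergence it tends to `0`
as `x → ∞`.
-/

lemma tendsto_one_add_rpow_neg {α : Type*} {l : Filter α} {g : α → ℝ} (hg : Tendsto g l atTop)
    {s : ℝ} (hs : 0 < s) : Tendsto (fun a => (1 + g a) ^ (-s)) l (𝓝 0) :=
  (tendsto_rpow_neg_atTop hs).comp (tendsto_atTop_add_const_left _ 1 hg)

namespace Complex

section HalfPlane

variable {E : Type*} [NormedAddCommGroup E] {f : ℂ → E} {v C s : ℝ}

lemma norm_le_mul_one_add_rpow_neg (hbound : ∀ z : ℂ, v ≤ z.re → ‖f z‖ ≤ C * (1 + ‖z‖) ^ (-s))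
    (hs : 0 ≤ s) {z : ℂ} (hz : v ≤ z.re) {r : ℝ} (hr0 : 0 ≤ r) (hr : r ≤ ‖z‖) :
    ‖f z‖ ≤ C * (1 + r) ^ (-s) := by
  have hC : 0 ≤ C := nonneg_of_mul_nonneg_left ((norm_nonneg _).trans (hbound z hz))
    (by positivity)
  refine (hbound z hz).trans (mul_le_mul_of_nonneg_left ?_ hC)
  exact Real.rpow_le_rpow_of_nonpos (by positivity) (by linarith) (by linarith)

lemma verticalIntegrable_of_norm_le (hf : ContinuousOn f {z | v ≤ z.re})
    (hbound : ∀ z : ℂ, v ≤ z.re → ‖f z‖ ≤ C * (1 + ‖z‖) ^ (-s)) (hs : 1 < s) {x : ℝ}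
    (hx : v ≤ x) : VerticalIntegrable f x := by
  have hline : Continuous fun y : ℝ => f (x + y * I) :=
    hf.comp_continuous (by fun_prop) fun y => by simpa using hx
  refine ((integrable_one_add_norm (by simpa using hs)).const_mul C).mono'
    hline.aestronglyMeasurable (ae_of_all _ fun y => ?_)
  exact norm_le_mul_one_add_rpow_neg hbound (by linarith) (by simpa using hx) (norm_nonneg y)
    (by simpa using abs_im_le_norm (x + y * I))

variable [NormedSpace ℂ E]

lemma tendsto_integral_horizontal (hbound : ∀ z : ℂ, v ≤ z.re → ‖f z‖ ≤ C * (1 + ‖z‖) ^ (-s))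
    (hs : 0 < s) {a b : ℝ} (ha : v ≤ a) (hb : v ≤ b) :
    Tendsto (fun T : ℝ => ∫ x in a..b, f (x + T * I)) (cocompact ℝ) (𝓝 0) := by
  refine squeeze_zero_norm (fun T => norm_integral_le_of_norm_le_const fun x hx => ?_)
    (((tendsto_one_add_rpow_neg tendsto_norm_cocompact_atTop hs).const_mul C).mul_const |b - a|
      |>.trans_eq (by simp))
  have hx : v ≤ x := (le_min ha hb).trans (uIoc_subset_uIcc hx).1
  exact norm_le_mul_one_add_rpow_neg hbound hs.le (by simpa using hx) (norm_nonneg T)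
    (by simpa using abs_im_le_norm (x + T * I))

lemma tendsto_integral_vertical_atTop (hf : ContinuousOn f {z | v ≤ z.re})
    (hbound : ∀ z : ℂ, v ≤ z.re → ‖f z‖ ≤ C * (1 + ‖z‖) ^ (-s)) (hs : 1 < s) :
    Tendsto (fun x : ℝ => ∫ y : ℝ, f (x + y * I)) atTop (𝓝 0) := by
  have hlim : ∀ y : ℝ, Tendsto (fun x : ℝ => f (x + y * I)) atTop (𝓝 0) := fun y =>
    squeeze_zero_norm' ((eventually_ge_atTop v).mono fun x hx =>
      norm_le_mul_one_add_rpow_neg hbound (by linarith) (by simpa using hx) (abs_nonneg x)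
        (by simpa using abs_re_le_norm (x + y * I)))
      ((tendsto_one_add_rpow_neg tendsto_abs_atTop_atTop (by linarith)).const_mul C
        |>.trans_eq (by simp))
  simpa using tendsto_integral_filter_of_dominated_convergence _
    ((eventually_ge_atTop v).mono fun x hx =>
      (verticalIntegrable_of_norm_le hf hbound hs hx).aestronglyMeasurable)
    ((eventually_ge_atTop v).mono fun x hx => ae_of_all _ fun y =>
      norm_le_mul_one_add_rpow_neg hbound (by linarith) (by simpa using hx) (norm_nonneg y)
        (by simpa using abs_im_le_norm (x + y * I)))
    ((integrable_one_add_norm (by simpa using hs)).const_mul C) (ae_of_all _ hlim)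

lemma integral_vertical_eq (hf : DifferentiableOn ℂ f {z | v ≤ z.re})
    (hbound : ∀ z : ℂ, v ≤ z.re → ‖f z‖ ≤ C * (1 + ‖z‖) ^ (-s)) (hs : 1 < s) {a b : ℝ}
    (ha : v ≤ a) (hb : v ≤ b) : ∫ y : ℝ, f (a + y * I) = ∫ y : ℝ, f (b + y * I) := by
  have hrect : ∀ T : ℝ, (∫ x in a..b, f (x + (-T) * I)) - (∫ x in a..b, f (x + T * I)) +
      I • (∫ y in -T..T, f (b + y * I)) - I • (∫ y in -T..T, f (a + y * I)) = 0 := fun T => by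
    simpa using integral_boundary_rect_eq_zero_of_differentiableOn f ⟨a, -T⟩ ⟨b, T⟩
      (hf.mono fun z hz => le_min ha hb |>.trans hz.1.1)
  have hvert : ∀ x : ℝ, v ≤ x →
      Tendsto (fun T : ℝ => ∫ y in -T..T, f (x + y * I)) atTop (𝓝 (∫ y : ℝ, f (x + y * I))) :=
    fun x hx => intervalIntegral_tendsto_integral
      (verticalIntegrable_of_norm_le hf.continuousOn hbound hs hx) tendsto_neg_atTop_atBot
      tendsto_id
  have hhor := tendsto_integral_horizontal hbound (zero_lt_one.trans hs) ha hb
  have hlim := (((hhor.comp (tendsto_neg_atTop_atBot.mono_right atBot_le_cocompact)).sub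
    (hhor.comp (tendsto_id.mono_right atTop_le_cocompact))).add
    ((hvert b hb).const_smul I)).sub ((hvert a ha).const_smul I)
  have h0 := tendsto_nhds_unique (hlim.congr fun T => by simpa using hrect T) tendsto_const_nhds
  rw [sub_zero, zero_add, ← smul_sub, smul_eq_zero, sub_eq_zero] at h0
  exact (h0.resolve_left I_ne_zero).symm

lemma integral_vertical_eq_zero (hf : DifferentiableOn ℂ f {z | v ≤ z.re})
    (hbound : ∀ z : ℂ, v ≤ z.re → ‖f z‖ ≤ C * (1 + ‖z‖) ^ (-s)) (hs : 1 < s) :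
    ∫ y : ℝ, f (v + y * I) = 0 :=
  tendsto_nhds_unique (tendsto_const_nhds.congr' <| (eventually_ge_atTop v).mono fun _ hx =>
      integral_vertical_eq hf hbound hs le_rfl hx)
    (tendsto_integral_vertical_atTop hf.continuousOn hbound hs)

end HalfPlane

lemma sq_add_ofReal_sq_mem_slitPlane {t : ℂ} (ht : 0 < t.re) (c : ℝ) :
    t ^ 2 + (c : ℂ) ^ 2 ∈ slitPlane := by
  rw [mem_slitPlane_iff]
  rcases eq_or_ne t.im 0 with h | h
  · left
    simp only [sq, add_re, mul_re, h, ← ofReal_mul, ofReal_re]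
    nlinarith
  · right
    simp only [sq, add_im, mul_im, ← ofReal_mul, ofReal_im]
    intro h0
    exact mul_ne_zero ht.ne' h (by linarith)

lemma differentiableOn_exp_mul_mul_cpow (a : ℂ) (c : ℝ) (ρ : ℂ) :
    DifferentiableOn ℂ (fun t => exp (a * t) * (t ^ 2 + (c : ℂ) ^ 2) ^ (-ρ)) {z | 0 < z.re} :=
  fun t ht => by
    have := sq_add_ofReal_sq_mem_slitPlane ht c
    fun_prop (disch := assumption)

lemma one_add_norm_le_mul_norm_sub {v : ℝ} (hv : 0 < v) (w : ℂ) {z : ℂ} (hz : v ≤ (z - w).re) :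
    1 + ‖z‖ ≤ (1 + (1 + ‖w‖) / v) * ‖z - w‖ := by
  have hvz : v ≤ ‖z - w‖ := hz.trans (re_le_norm _)
  have hw : 1 + ‖w‖ ≤ (1 + ‖w‖) / v * ‖z - w‖ := by
    rw [div_mul_eq_mul_div, le_div_iff₀ hv]
    exact mul_le_mul_of_nonneg_left hvz (by positivity)
  calc 1 + ‖z‖ ≤ 1 + ‖w‖ + ‖z - w‖ := by linarith [norm_le_insert' z w]
    _ ≤ _ := by linarith

lemma one_add_norm_div_sq_le_norm_sq_add_sq {v : ℝ} (hv : 0 < v) (c : ℝ) {t : ℂ}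
    (ht : v ≤ t.re) : ((1 + ‖t‖) / (1 + (1 + |c|) / v)) ^ 2 ≤ ‖t ^ 2 + (c : ℂ) ^ 2‖ := by
  have hK : 0 < 1 + (1 + |c|) / v := by positivity
  have hfactor : ∀ w : ℂ, ‖w‖ = |c| → w.re = 0 → (1 + ‖t‖) / (1 + (1 + |c|) / v) ≤ ‖t - w‖ :=
    fun w hw hre => by
      rw [div_le_iff₀' hK, ← hw]
      exact one_add_norm_le_mul_norm_sub hv w (by simpa [hre] using ht)
  have hsplit : t ^ 2 + (c : ℂ) ^ 2 = (t - c * I) * (t - -(c * I)) := by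
    linear_combination (c : ℂ) ^ 2 * I_sq
  rw [sq, hsplit, norm_mul]
  exact mul_le_mul (hfactor _ (by simp) (by simp)) (hfactor _ (by simp) (by simp))
    (by positivity) (norm_nonneg _)

lemma norm_cpow_le_exp_mul_rpow (z w : ℂ) : ‖z ^ w‖ ≤ Real.exp (π * |w.im|) * ‖z‖ ^ w.re := by
  refine (norm_cpow_le z w).trans ?_
  rw [div_eq_mul_inv, ← Real.exp_neg, mul_comm]
  gcongr
  calc -(arg z * w.im) ≤ |arg z * w.im| := neg_le_abs _
    _ = |arg z| * |w.im| := abs_mul _ _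
    _ ≤ π * |w.im| := by gcongr; exact abs_arg_le_pi z

lemma norm_exp_ofReal_mul_le_one {a : ℝ} (ha : a ≤ 0) {t : ℂ} (ht : 0 ≤ t.re) :
    ‖exp (a * t)‖ ≤ 1 := by
  rw [norm_exp, re_ofReal_mul, Real.exp_le_one_iff]
  exact mul_nonpos_of_nonpos_of_nonneg ha ht

lemma norm_exp_mul_mul_cpow_le {v : ℝ} (hv : 0 < v) {a : ℝ} (ha : a ≤ 0) (c : ℝ) {ρ : ℂ}
    (hρ : 0 ≤ ρ.re) {t : ℂ} (ht : v ≤ t.re) :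
    ‖exp (a * t) * (t ^ 2 + (c : ℂ) ^ 2) ^ (-ρ)‖ ≤
      Real.exp (π * |ρ.im|) * (1 + (1 + |c|) / v) ^ (2 * ρ.re) * (1 + ‖t‖) ^ (-(2 * ρ.re)) := by
  set K := 1 + (1 + |c|) / v
  have hK : 0 < K := by positivity
  have hpow : ‖(t ^ 2 + (c : ℂ) ^ 2) ^ (-ρ)‖ ≤
      Real.exp (π * |ρ.im|) * ((1 + ‖t‖) / K) ^ (-(2 * ρ.re)) := by
    refine (norm_cpow_le_exp_mul_rpow _ _).trans ?_
    rw [neg_im, abs_neg, neg_re, neg_mul_eq_mul_neg, Real.rpow_mul (by positivity),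
      Real.rpow_two]
    exact mul_le_mul_of_nonneg_left (Real.rpow_le_rpow_of_nonpos (by positivity)
      (one_add_norm_div_sq_le_norm_sq_add_sq hv c ht) (by linarith)) (Real.exp_pos _).le
  rw [norm_mul]
  calc _ ≤ 1 * (Real.exp (π * |ρ.im|) * ((1 + ‖t‖) / K) ^ (-(2 * ρ.re))) :=
        mul_le_mul (norm_exp_ofReal_mul_le_one ha (hv.le.trans ht)) hpow (norm_nonneg _)
          zero_le_one
    _ = _ := by
      rw [one_mul, Real.div_rpow (by positivity) hK.le, Real.rpow_neg hK.le, div_inv_eq_mul]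
      ring

end Complex

theorem vertical_line_integral_vanishes_general (ρ : ℂ) (hρ : 1 / 2 < ρ.re)
    (lam v : ℝ) (hv : 0 < v) (m : ℤ) (hm : m ≤ 0) :
    ∫ y : ℝ, Complex.exp (2 * Real.pi * m * ((v : ℂ) + I * y)) *
        (((v : ℂ) + I * y) ^ 2 + (lam : ℂ) ^ 2) ^ (-ρ) = 0 := by
  have ha : 2 * π * m ≤ 0 :=
    mul_nonpos_of_nonneg_of_nonpos (by positivity) (Int.cast_nonpos.mpr hm)
  have key := integral_vertical_eq_zero
    ((differentiableOn_exp_mul_mul_cpow (2 * π * m : ℝ) lam ρ).mono fun _ hz => hv.trans_le hz)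
    (fun _ ht => norm_exp_mul_mul_cpow_le hv ha lam (by linarith) ht) (by linarith : 1 < 2 * ρ.re)
  simpa [mul_comm I] using key

/-- For Re ρ > 1/2, λ > 0, v > 0 and m ≤ 0, the integral of e^{2πmt}(t²+λ²)^{−ρ}
along the vertical line t = v + iy, y ∈ ℝ, vanishes. -/
theorem vertical_line_integral_vanishes (ρ : ℂ) (hρ : 1 / 2 < ρ.re)
    (lam v : ℝ) (hlam : 0 < lam) (hv : 0 < v) (m : ℤ) (hm : m ≤ 0) :
    ∫ y : ℝ, Complex.exp (2 * Real.pi * m * ((v : ℂ) + I * y)) *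
        (((v : ℂ) + I * y) ^ 2 + (lam : ℂ) ^ 2) ^ (-ρ) = 0 :=
  vertical_line_integral_vanishes_general ρ hρ lam v hv m hm
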